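/- Define ξ^N : ℕ → ℝ for N ≥ 2 by ξ^N_n = 1 for n < N, ξ^N_n = (2 log N - log n)/log N for N ≤ n ≤ N², and ξ^N_n = 0 for n > N². Then for every q ∈ (0, 1/2], the sums S_N := ∑_{n≥2} n^q (n-1)^q |ξ^N_n - ξ^N_{n-1}|² satisfy S_N ≤ 4/log N, and in particular S_N → 0 as N → ∞. -/

import Mathlib

/-- The cut-off sequence `ξ^N`. -/
noncomputable def xi (N n : ℕ) : ℝ :=
  if n < N then 1
  else if n ≤ N ^ 2 then (2 * Real.log N - Real.log n) / Real.log N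
  else 0

/-! For `N ≥ 2`, `ξ^N_n` is the profile `(2 log N - log n) / log N` clamped to `[0, 1]`. Clamping is
monotone and `1`-Lipschitz, so `ξ^N` is antitone with steps
`δ_n = ξ^N_{n+1} - ξ^N_{n+2} ≤ (log (n + 2) - log (n + 1)) / log N ≤ 1 / ((n + 1) log N)`.
As `q ≤ 1/2`, the weight `(n + 2)^q (n + 1)^q` is at most `n + 2`, so the `n`-th term of `S_N` is at
most `(2 / log N) δ_n`. The steps telescope to `ξ^N_1 - ξ^N_{N^2+1} = 1`, whence `S_N ≤ 2 / log N`. -/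

open Real Set Filter Finset

lemma Real.monotone_log_natCast : Monotone fun n : ℕ => log n := by
  intro m n hmn
  rcases m.eq_zero_or_pos with rfl | hm
  · simpa using log_natCast_nonneg n
  · exact log_le_log (by exact_mod_cast hm) (by exact_mod_cast hmn)

lemma Real.log_add_one_sub_log_le {x : ℝ} (hx : 0 < x) : log (x + 1) - log x ≤ 1 / x := by
  have h := log_le_sub_one_of_pos (div_pos (by linarith) hx : 0 < (x + 1) / x)
  rwa [log_div (by linarith) hx.ne', add_div, div_self hx.ne', add_sub_cancel_left] at h

lemma Real.rpow_mul_rpow_le_of_le_half {x y q : ℝ} (hx : 1 ≤ x) (hxy : x ≤ y) (hq : q ≤ 1 / 2) :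
    y ^ q * x ^ q ≤ y := by
  have hy : 0 ≤ y := by linarith
  calc y ^ q * x ^ q = (y * x) ^ q := (mul_rpow hy (by linarith)).symm
    _ ≤ (y * x) ^ (1 / 2 : ℝ) :=
        rpow_le_rpow_of_exponent_le (one_le_mul_of_one_le_of_one_le (hx.trans hxy) hx) hq
    _ = √(y * x) := (sqrt_eq_rpow _).symm
    _ ≤ √(y * y) := sqrt_le_sqrt (mul_le_mul_of_nonneg_left hxy hy)
    _ = y := sqrt_mul_self hy

noncomputable def xiProfile (N n : ℕ) : ℝ := (2 * log N - log n) / log N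

variable {N : ℕ}

lemma antitone_xiProfile (hN : 2 ≤ N) : Antitone (xiProfile N) := by
  have hL : 0 < log N := log_pos (by exact_mod_cast hN)
  intro m n hmn
  exact div_le_div_of_nonneg_right (sub_le_sub_left (monotone_log_natCast hmn) _) hL.le

lemma xi_eq_projIcc_xiProfile (hN : 2 ≤ N) (n : ℕ) :
    xi N n = projIcc 0 1 zero_le_one (xiProfile N n) := by
  have hL : 0 < log N := log_pos (by exact_mod_cast hN)
  have hlogsq : log ((N ^ 2 : ℕ) : ℝ) = 2 * log N := by push_cast; rw [log_pow]; norm_num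
  unfold xi
  split_ifs with hlt hle
  · have h : 1 ≤ xiProfile N n := by
      rw [xiProfile, le_div_iff₀ hL]
      linarith [monotone_log_natCast hlt.le]
    rw [projIcc_of_right_le zero_le_one h]
  · have h0 : 0 ≤ xiProfile N n :=
      div_nonneg (by linarith [monotone_log_natCast hle]) hL.le
    have h1 : xiProfile N n ≤ 1 := by
      rw [xiProfile, div_le_one hL]
      linarith [monotone_log_natCast (not_lt.1 hlt)]
    rw [projIcc_of_mem zero_le_one ⟨h0, h1⟩]
    rfl
  · have h : xiProfile N n ≤ 0 := by
      apply div_nonpos_of_nonpos_of_nonneg _ hL.le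
      linarith [monotone_log_natCast (not_le.1 hle).le]
    rw [projIcc_of_le_left zero_le_one h]

lemma antitone_xi (hN : 2 ≤ N) : Antitone (xi N) := by
  intro m n hmn
  rw [xi_eq_projIcc_xiProfile hN, xi_eq_projIcc_xiProfile hN]
  exact monotone_projIcc _ (antitone_xiProfile hN hmn)

lemma xi_sub_xi_succ_le (hN : 2 ≤ N) (n : ℕ) :
    xi N n - xi N (n + 1) ≤ (log (n + 1) - log n) / log N := by
  have hL : 0 < log N := log_pos (by exact_mod_cast hN)
  calc xi N n - xi N (n + 1) ≤ |xiProfile N n - xiProfile N (n + 1)| := by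
        rw [xi_eq_projIcc_xiProfile hN, xi_eq_projIcc_xiProfile hN]
        exact (le_abs_self _).trans (abs_projIcc_sub_projIcc _)
    _ = (log (n + 1) - log n) / log N := by
        rw [xiProfile, xiProfile, ← sub_div, abs_div, abs_of_pos hL]
        have hmono := monotone_log_natCast n.le_succ
        push_cast at hmono ⊢
        rw [abs_of_nonneg (by linarith)]
        ring

lemma xi_eq_zero_of_sq_le {n : ℕ} (hn : N ^ 2 ≤ n) : xi N n = 0 := by
  have hNn : N ≤ n := (Nat.le_self_pow two_ne_zero N).trans hn
  unfold xi
  split_ifs with hlt hle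
  · omega
  · obtain rfl : n = N ^ 2 := le_antisymm hle hn
    push_cast
    rw [log_pow]
    norm_num
  · rfl

lemma weighted_sq_xi_step_le (hN : 2 ≤ N) {q : ℝ} (hq : q ≤ 1 / 2) (n : ℕ) :
    ((n : ℝ) + 2) ^ q * ((n : ℝ) + 1) ^ q * |xi N (n + 2) - xi N (n + 1)| ^ 2
      ≤ 2 / log N * (xi N (n + 1) - xi N (n + 2)) := by
  set δ := xi N (n + 1) - xi N (n + 2) with hδ
  have hδ_nonneg : 0 ≤ δ := sub_nonneg.2 (antitone_xi hN (n + 1).le_succ)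
  have hδ_le : δ ≤ (log ((n : ℝ) + 2) - log ((n : ℝ) + 1)) / log N := by
    have h := xi_sub_xi_succ_le hN (n + 1)
    push_cast at h
    rwa [show (n : ℝ) + 1 + 1 = n + 2 by ring] at h
  have hweight : ((n : ℝ) + 2) ^ q * ((n : ℝ) + 1) ^ q ≤ (n : ℝ) + 2 :=
    rpow_mul_rpow_le_of_le_half (by linarith [n.cast_nonneg (α := ℝ)]) (by linarith) hq
  have hgap : ((n : ℝ) + 2) * (log ((n : ℝ) + 2) - log ((n : ℝ) + 1)) ≤ 2 := by
    have hlog := log_add_one_sub_log_le (by positivity : (0 : ℝ) < n + 1)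
    rw [show (n : ℝ) + 1 + 1 = n + 2 by ring] at hlog
    calc ((n : ℝ) + 2) * (log ((n : ℝ) + 2) - log ((n : ℝ) + 1))
        ≤ ((n : ℝ) + 2) * (1 / ((n : ℝ) + 1)) := by gcongr
      _ ≤ 2 := by
        rw [mul_one_div, div_le_iff₀ (by positivity)]
        linarith
  have hstep : ((n : ℝ) + 2) * δ ≤ 2 / log N :=
    calc ((n : ℝ) + 2) * δ
        ≤ ((n : ℝ) + 2) * ((log ((n : ℝ) + 2) - log ((n : ℝ) + 1)) / log N) := by gcongr
      _ = ((n : ℝ) + 2) * (log ((n : ℝ) + 2) - log ((n : ℝ) + 1)) / log N := by ring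
      _ ≤ 2 / log N := by gcongr
  rw [abs_sub_comm, ← hδ, abs_of_nonneg hδ_nonneg]
  calc ((n : ℝ) + 2) ^ q * ((n : ℝ) + 1) ^ q * δ ^ 2 ≤ (((n : ℝ) + 2) * δ) * δ := by
        rw [sq, ← mul_assoc]
        gcongr
    _ ≤ 2 / log N * δ := by gcongr

/-- The sum `S_N` of the statement, re-indexed to start at `n = 0`. -/
noncomputable def xiEnergy (q : ℝ) (N : ℕ) : ℝ :=
  ∑' n : ℕ, ((n : ℝ) + 2) ^ q * ((n : ℝ) + 1) ^ q * |xi N (n + 2) - xi N (n + 1)| ^ 2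

lemma xiEnergy_nonneg (q : ℝ) (N : ℕ) : 0 ≤ xiEnergy q N :=
  tsum_nonneg fun n => by positivity

lemma xiEnergy_le (hN : 2 ≤ N) {q : ℝ} (hq : q ≤ 1 / 2) : xiEnergy q N ≤ 2 / log N := by
  have hsupp : ∀ n ∉ range (N ^ 2),
      ((n : ℝ) + 2) ^ q * ((n : ℝ) + 1) ^ q * |xi N (n + 2) - xi N (n + 1)| ^ 2 = 0 := by
    intro n hn
    rw [Finset.mem_range, not_lt] at hn
    rw [xi_eq_zero_of_sq_le (by omega : N ^ 2 ≤ n + 2), xi_eq_zero_of_sq_le (by omega : N ^ 2 ≤ n + 1)]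
    simp
  rw [xiEnergy, tsum_eq_sum hsupp]
  calc _ ≤ ∑ n ∈ range (N ^ 2), 2 / log N * (xi N (n + 1) - xi N (n + 2)) :=
        sum_le_sum fun n _ => weighted_sq_xi_step_le hN hq n
    _ = 2 / log N * (xi N 1 - xi N (N ^ 2 + 1)) := by
        rw [← mul_sum, sum_range_sub' (fun n => xi N (n + 1))]
    _ = 2 / log N := by
        rw [xi_eq_zero_of_sq_le (N ^ 2).le_succ, xi, if_pos (by omega : 1 < N)]
        ring

theorem xi_sum_bound_general (q : ℝ) (hq : q ≤ 1 / 2) :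
    (∀ N : ℕ, 2 ≤ N →
      ∑' n : ℕ, ((n : ℝ) + 2) ^ q * ((n : ℝ) + 1) ^ q * |xi N (n + 2) - xi N (n + 1)| ^ 2
        ≤ 4 / Real.log N)
    ∧ Filter.Tendsto
        (fun N : ℕ =>
          ∑' n : ℕ, ((n : ℝ) + 2) ^ q * ((n : ℝ) + 1) ^ q * |xi N (n + 2) - xi N (n + 1)| ^ 2)
        Filter.atTop (nhds 0) := by
  have hlog : Tendsto (fun N : ℕ => log N) atTop atTop :=
    tendsto_log_atTop.comp tendsto_natCast_atTop_atTop
  refine ⟨fun N hN => (xiEnergy_le hN hq).trans ?_, ?_⟩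
  · exact div_le_div_of_nonneg_right (by norm_num) (log_natCast_nonneg N)
  · exact squeeze_zero' (.of_forall (xiEnergy_nonneg q))
      ((eventually_ge_atTop 2).mono fun N hN => xiEnergy_le hN hq)
      (tendsto_const_nhds.div_atTop hlog)

theorem xi_sum_bound (q : ℝ) (hq0 : 0 < q) (hq : q ≤ 1 / 2) :
    (∀ N : ℕ, 2 ≤ N →
      ∑' n : ℕ, ((n : ℝ) + 2) ^ q * ((n : ℝ) + 1) ^ q * |xi N (n + 2) - xi N (n + 1)| ^ 2
        ≤ 4 / Real.log N)
    ∧ Filter.Tendsto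
        (fun N : ℕ =>
          ∑' n : ℕ, ((n : ℝ) + 2) ^ q * ((n : ℝ) + 1) ^ q * |xi N (n + 2) - xi N (n + 1)| ^ 2)
        Filter.atTop (nhds 0) :=
  xi_sum_bound_general q hq
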